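/- arXiv:2303.06489 — 2 statements merged into one kernel-verified Lean document; each statement's English description precedes it below -/
import Mathlib

section
/- Let n ≥ 4 and A ≥ 4. Then σ_{n−1}({θ ∈ S^{n−1} : max_{1 ≤ i ≤ n} |θ_i| > A·√((log n)/n)}) ≤ 8/(A·√(2π))·(1/n). -/
open MeasureTheory ProbabilityTheory

noncomputable section

/-- The Cauchy transform `G_ν(z) = ∫ 1/(z - t) dν(t)` of a measure on `ℝ`. -/
def cauchyT (ν : Measure ℝ) (z : ℂ) : ℂ := ∫ t, (z - (t : ℂ))⁻¹ ∂ν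

/-- The reciprocal Cauchy transform `F_ν = 1 / G_ν`. -/
def recipCauchyT (ν : Measure ℝ) (z : ℂ) : ℂ := (cauchyT ν z)⁻¹

/-- Wigner's semicircle law: density `(2π)⁻¹ √(4 - x²)` on `[-2, 2]`, `0` elsewhere. -/
def semicircle : Measure ℝ :=
  volume.withDensity fun x =>
    ENNReal.ofReal (Set.indicator (Set.Icc (-2 : ℝ) 2)
      (fun y => (2 * Real.pi)⁻¹ * Real.sqrt (4 - y ^ 2)) x)

/-- Kolmogorov distance of two measures on `ℝ`. -/
def kolDist (μ ν : Measure ℝ) : ℝ :=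
  ⨆ x : ℝ, |(μ (Set.Iic x)).toReal - (ν (Set.Iic x)).toReal|

/-- Lévy distance of two measures on `ℝ`. -/
def levyDist (μ ν : Measure ℝ) : ℝ :=
  sInf {s : ℝ | 0 < s ∧ ∀ x : ℝ,
    (μ (Set.Iic (x - s))).toReal - s ≤ (ν (Set.Iic x)).toReal ∧
    (ν (Set.Iic x)).toReal ≤ (μ (Set.Iic (x + s))).toReal + s}

/-- The dilation `D_c ν`: pushforward of `ν` under `x ↦ c·x`. -/
def dilate (c : ℝ) (ν : Measure ℝ) : Measure ℝ := ν.map (fun x => c * x)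

/-- The (topological) support of a measure on `ℝ`. -/
def msupport (ν : Measure ℝ) : Set ℝ := {x | ∀ U ∈ nhds x, 0 < ν U}

/-- `Z 0, …, Z (n-1)` are subordination functions for the family `ν`. -/
def IsSubord {n : ℕ} (ν : Fin n → Measure ℝ) (Z : Fin n → ℂ → ℂ) : Prop :=
  (∀ i, DifferentiableOn ℂ (Z i) {z : ℂ | 0 < z.im}) ∧
  (∀ i, ∀ z : ℂ, 0 < z.im → 0 < (Z i z).im) ∧
  (∀ z : ℂ, 0 < z.im → ∀ i j,
    recipCauchyT (ν i) (Z i z) = recipCauchyT (ν j) (Z j z)) ∧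
  (∀ z : ℂ, 0 < z.im → ∀ i,
    (∑ j, Z j z) - z = ((n : ℂ) - 1) * recipCauchyT (ν i) (Z i z))

/-- `μ` is the free additive convolution `ν 0 ⊞ ⋯ ⊞ ν (n-1)`, characterized via
subordination: `F_μ(z) = F_{ν i}(Z i z)` on the upper half-plane. -/
def IsFreeConv {n : ℕ} (ν : Fin n → Measure ℝ) (μ : Measure ℝ) : Prop :=
  ∃ Z : Fin n → ℂ → ℂ, IsSubord ν Z ∧
    ∀ z : ℂ, 0 < z.im → ∀ i, recipCauchyT μ z = recipCauchyT (ν i) (Z i z)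

/-- The uniform (normalized, rotation-invariant) probability measure on the unit
sphere `S^{n-1} ⊆ ℝⁿ`, realized as the pushforward of the standard Gaussian measure
under the normalization map `x ↦ x / ‖x‖`. -/
def sphereMeasure (n : ℕ) : Measure (Fin n → ℝ) :=
  (Measure.pi fun _ : Fin n => gaussianReal 0 1).map
    (fun x => (Real.sqrt (∑ i, x i ^ 2))⁻¹ • x)

/-- The unit sphere `S^{n-1}` in `ℝⁿ`. -/
def unitSphere (n : ℕ) : Set (Fin n → ℝ) := {θ | ∑ i, θ i ^ 2 = 1}

end


section AuxSphereConc
open MeasureTheory ProbabilityTheory Real ENNReal NNReal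


lemma gauss_density_integral (g : ℝ → ℝ) :
    ∫ x, g x ∂(gaussianReal 0 1) = ∫ x, gaussianPDFReal 0 1 x * g x := by
  rw [gaussianReal_of_var_ne_zero 0 one_ne_zero]
  have : (gaussianPDF 0 1) = fun x => ((gaussianPDFReal 0 1 x).toNNReal : ℝ≥0∞) := rfl
  rw [this, integral_withDensity_eq_integral_smul
    ((measurable_gaussianPDFReal 0 1).real_toNNReal)]
  congr 1; ext x
  simp [NNReal.smul_def, Real.coe_toNNReal _ (gaussianPDFReal_nonneg 0 1 x)]

lemma gauss_pdf_mul_exp (c : ℝ) (x : ℝ) :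
    gaussianPDFReal 0 1 x * Real.exp (c * x ^ 2)
      = (Real.sqrt (2 * π))⁻¹ * Real.exp (-(1/2 - c) * x ^ 2) := by
  rw [gaussianPDFReal]
  push_cast
  rw [mul_assoc, ← Real.exp_add]
  ring_nf

lemma gauss_exp_sq_integrable {c : ℝ} (hc : c < 1/2) :
    Integrable (fun x => Real.exp (c * x^2)) (gaussianReal 0 1) := by
  rw [gaussianReal_of_var_ne_zero 0 one_ne_zero]
  have h : (gaussianPDF 0 1) = fun x => ((gaussianPDFReal 0 1 x).toNNReal : ℝ≥0∞) := rfl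
  rw [h]
  refine (integrable_withDensity_iff_integrable_smul (E := ℝ)
    (g := fun x => Real.exp (c * x ^ 2))
    ((measurable_gaussianPDFReal 0 1).real_toNNReal)).mpr ?_
  have : (fun x => (gaussianPDFReal 0 1 x).toNNReal • Real.exp (c * x ^ 2))
      = fun x => (Real.sqrt (2 * π))⁻¹ * Real.exp (-(1/2 - c) * x ^ 2) := by
    ext x
    rw [NNReal.smul_def, smul_eq_mul, Real.coe_toNNReal _ (gaussianPDFReal_nonneg 0 1 x),
      gauss_pdf_mul_exp]
  rw [this]
  exact (integrable_exp_neg_mul_sq (by linarith)).const_mul _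

lemma gauss_exp_sq_integral {c : ℝ} (hc : c < 1/2) :
    ∫ x, Real.exp (c * x^2) ∂(gaussianReal 0 1) = (Real.sqrt (1 - 2*c))⁻¹ := by
  rw [gauss_density_integral]
  simp_rw [gauss_pdf_mul_exp]
  rw [integral_const_mul, integral_gaussian]
  have h1 : (0:ℝ) < 1/2 - c := by linarith
  rw [show π / (1/2 - c) = (2*π) * (1-2*c)⁻¹ by field_simp,
    Real.sqrt_mul (by positivity : (0:ℝ) ≤ 2*π), Real.sqrt_inv,
    Real.sqrt_mul (by norm_num : (0:ℝ) ≤ 2) π, ← mul_assoc,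
    inv_mul_cancel₀ (by positivity), one_mul]


lemma integral_pi_gauss {n : ℕ} (f : Fin n → ℝ → ℝ) :
    ∫ x : Fin n → ℝ, ∏ i, f i (x i) ∂(Measure.pi fun _ => gaussianReal 0 1)
      = ∏ i, ∫ x, f i x ∂(gaussianReal 0 1) :=
  MeasureTheory.integral_fintype_prod_eq_prod (E := fun _ => ℝ) f
    (μ := fun _ => gaussianReal 0 1)

lemma integrable_pi_gauss {n : ℕ} (f : Fin n → ℝ → ℝ)
    (hf : ∀ i, Integrable (f i) (gaussianReal 0 1)) :
    Integrable (fun x : Fin n → ℝ => ∏ i, f i (x i))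
      (Measure.pi fun _ => gaussianReal 0 1) :=
  MeasureTheory.Integrable.fintype_prod (f := f) (μ := fun _ => gaussianReal 0 1) hf


lemma markov_bound {α} [MeasurableSpace α] (μ : Measure α) [IsProbabilityMeasure μ]
    {s : Set α} (hs : MeasurableSet s) {h : α → ℝ}
    (h0 : ∀ x, 0 ≤ h x) (h1 : ∀ x ∈ s, 1 ≤ h x) (hint : Integrable h μ) :
    (μ s).toReal ≤ ∫ x, h x ∂μ := by
  rw [← measureReal_def, ← integral_indicator_one hs]
  refine integral_mono ((integrable_indicator_iff hs).mpr ?_) hint ?_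
  · exact integrableOn_const (measure_ne_top μ s)
  · intro x
    by_cases hx : x ∈ s
    · simpa [Set.indicator_of_mem hx] using h1 x hx
    · simpa [Set.indicator_of_notMem hx] using h0 x

lemma per_index_bound {n : ℕ} {t : ℝ} (ht0 : 0 < t) (i : Fin n) :
    (Measure.pi (fun _ : Fin n => gaussianReal 0 1))
      {x : Fin n → ℝ | t ^ 2 * ∑ j, x j ^ 2 < x i ^ 2}
      ≤ ENNReal.ofReal (t⁻¹ * ((Real.sqrt (1 + t ^ 2))⁻¹) ^ (n - 1)) := by
  set π' := Measure.pi (fun _ : Fin n => gaussianReal 0 1) with hπ'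
  have : IsProbabilityMeasure π' := by infer_instance
  set c : Fin n → ℝ := fun j => if j = i then (1 - t ^ 2) / 2 else -(t ^ 2) / 2 with hc
  have hclt : ∀ j, c j < 1 / 2 := by
    intro j
    by_cases h : j = i <;> simp only [hc, h, if_true, if_false, if_pos, if_neg] <;> nlinarith
  have hs : MeasurableSet {x : Fin n → ℝ | t ^ 2 * ∑ j, x j ^ 2 < x i ^ 2} := by
    apply measurableSet_lt
    · exact (Finset.measurable_sum _ fun j _ => (measurable_pi_apply j).pow_const 2).const_mul _
    · exact (measurable_pi_apply i).pow_const 2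
  have key : (π' {x : Fin n → ℝ | t ^ 2 * ∑ j, x j ^ 2 < x i ^ 2}).toReal
      ≤ t⁻¹ * ((Real.sqrt (1 + t ^ 2))⁻¹) ^ (n - 1) := by
    have sum_eq : ∀ x : Fin n → ℝ,
        ∑ j, c j * x j ^ 2 = x i ^ 2 / 2 - t ^ 2 / 2 * ∑ j, x j ^ 2 := by
      intro x
      have : ∀ j ∈ Finset.univ, c j * x j ^ 2
          = (if j = i then x j ^ 2 / 2 else 0) + (-(t ^ 2) / 2) * x j ^ 2 := by
        intro j _
        by_cases h : j = i <;> simp only [hc, h, if_true, if_false, if_pos, if_neg] <;> ring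
      rw [Finset.sum_congr rfl this, Finset.sum_add_distrib, Finset.sum_ite_eq'
        Finset.univ i fun j => x j ^ 2 / 2, ← Finset.mul_sum]
      simp only [Finset.mem_univ, if_true]
      ring
    have hmb := markov_bound π' hs
      (h := fun x : Fin n → ℝ => ∏ j, Real.exp (c j * x j ^ 2))
      (fun x => Finset.prod_nonneg fun j _ => (Real.exp_pos _).le)
      (fun x hx => by
        show 1 ≤ ∏ j, Real.exp (c j * x j ^ 2)
        rw [← Real.exp_sum, sum_eq]
        refine Real.one_le_exp (by simp only [Set.mem_setOf_eq] at hx; nlinarith))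
      (integrable_pi_gauss _ fun j => gauss_exp_sq_integrable (hclt j))
    refine hmb.trans ?_
    show ∫ x : Fin n → ℝ, ∏ j, Real.exp (c j * x j ^ 2) ∂π' ≤ _
    rw [hπ', integral_pi_gauss (f := fun j y => Real.exp (c j * y ^ 2))]
    have prod_eq : ∀ j, ∫ x, Real.exp (c j * x ^ 2) ∂(gaussianReal 0 1)
        = if j = i then t⁻¹ else (Real.sqrt (1 + t ^ 2))⁻¹ := by
      intro j
      rw [gauss_exp_sq_integral (hclt j)]
      by_cases h : j = i
      · simp only [hc, h, if_true]
        rw [show (1 : ℝ) - 2 * ((1 - t ^ 2) / 2) = t ^ 2 by ring, Real.sqrt_sq ht0.le]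
      · simp only [hc, h, if_false, if_neg h]
        rw [show (1 : ℝ) - 2 * (-(t ^ 2) / 2) = 1 + t ^ 2 by ring]
    rw [Finset.prod_congr rfl fun j _ => prod_eq j,
      Finset.prod_eq_mul_prod_sdiff_singleton_of_mem (Finset.mem_univ i)]
    simp only [if_pos rfl]
    have : ∀ j ∈ Finset.univ \ {i}, (if j = i then t⁻¹ else (Real.sqrt (1 + t ^ 2))⁻¹)
        = (Real.sqrt (1 + t ^ 2))⁻¹ := by
      intro j hj
      rw [if_neg (by simpa using (Finset.mem_sdiff.mp hj).2)]
    rw [Finset.prod_congr rfl this, Finset.prod_const, Finset.card_sdiff_of_subset (by simp),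
      Finset.card_univ, Fintype.card_fin, Finset.card_singleton]
    simp
  calc π' {x : Fin n → ℝ | t ^ 2 * ∑ j, x j ^ 2 < x i ^ 2}
      = ENNReal.ofReal (π' {x : Fin n → ℝ | t ^ 2 * ∑ j, x j ^ 2 < x i ^ 2}).toReal :=
        (ENNReal.ofReal_toReal (measure_ne_top _ _)).symm
    _ ≤ _ := ENNReal.ofReal_le_ofReal key

lemma scalar_ineq {n : ℕ} (hn : 4 ≤ n) {A t : ℝ} (hA : 4 ≤ A)
    (ht : t = A * Real.sqrt (Real.log n / n)) (ht1 : t < 1) :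
    (n : ℝ) * (t⁻¹ * ((Real.sqrt (1 + t ^ 2))⁻¹) ^ (n - 1))
      ≤ 8 / (A * Real.sqrt (2 * Real.pi)) * (1 / n) := by
  have hN : (4 : ℝ) ≤ (n : ℝ) := by exact_mod_cast hn
  have hN0 : (0 : ℝ) < n := by linarith
  have hL : 1 < Real.log n :=
    (Real.lt_log_iff_exp_lt hN0).mpr (by nlinarith [Real.exp_one_lt_d9])
  have hL0 : 0 < Real.log n := by linarith
  have ht0 : 0 < t := by
    rw [ht]; positivity
  have ht2 : t ^ 2 * n = A ^ 2 * Real.log n := by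
    rw [ht, mul_pow, Real.sq_sqrt (by positivity)]
    field_simp
  have htsq : t ^ 2 < 1 := by nlinarith
  set L := Real.log n with hLdef
  set N := (n : ℝ) with hNdef
  have hA2 : (16 : ℝ) ≤ A ^ 2 := by nlinarith
  -- exp (t²/2) ≤ 1 + t²
  have e1 : Real.exp (t ^ 2 / 2) ≤ 1 + t ^ 2 := by
    have h1 : 1 - t ^ 2 / 2 ≤ Real.exp (-(t ^ 2 / 2)) := by
      have := Real.add_one_le_exp (-(t ^ 2 / 2)); linarith
    have h2 : Real.exp (t ^ 2 / 2) * Real.exp (-(t ^ 2 / 2)) = 1 := by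
      rw [← Real.exp_add]; simp
    have h3 : 0 < Real.exp (t ^ 2 / 2) := Real.exp_pos _
    nlinarith [sq_nonneg t, Real.exp_pos (-(t ^ 2 / 2))]
  -- N^5 ≤ (1+t²)^(n-1)
  have hP : N ^ 5 ≤ (1 + t ^ 2) ^ (n - 1) := by
    have hcast : ((n - 1 : ℕ) : ℝ) = N - 1 := by
      rw [Nat.cast_sub (by omega)]; simp [hNdef]
    have step1 : Real.exp (5 * L) ≤ Real.exp (((n - 1 : ℕ) : ℝ) * (t ^ 2 / 2)) := by
      apply Real.exp_le_exp.mpr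
      rw [hcast]
      have hNL : 4 * L ≤ N * L := mul_le_mul_of_nonneg_right hN hL0.le
      have h5 : 5 * L * N ≤ (N - 1) * (16 * L) / 2 := by nlinarith
      have h6 : (N - 1) * (16 * L) ≤ (N - 1) * (A ^ 2 * L) :=
        mul_le_mul_of_nonneg_left
          (mul_le_mul_of_nonneg_right hA2 hL0.le) (by linarith)
      have h7 : (N - 1) * (t ^ 2 / 2) * N = (N - 1) * (A ^ 2 * L) / 2 := by
        have : t ^ 2 = A ^ 2 * L / N := by
          field_simp at ht2 ⊢; linarith [ht2]
        rw [this]; field_simp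
      have h8 : 5 * L * N ≤ (N - 1) * (t ^ 2 / 2) * N := by
        rw [h7]; linarith
      have := mul_le_mul_of_nonneg_right h8 (le_of_lt (inv_pos.mpr hN0))
      calc 5 * L = 5 * L * N * N⁻¹ := by field_simp
        _ ≤ (N - 1) * (t ^ 2 / 2) * N * N⁻¹ := this
        _ = (N - 1) * (t ^ 2 / 2) := by field_simp
    have step2 : Real.exp (((n - 1 : ℕ) : ℝ) * (t ^ 2 / 2)) ≤ (1 + t ^ 2) ^ (n - 1) := by
      rw [Real.exp_nat_mul]
      exact pow_le_pow_left₀ (Real.exp_pos _).le e1 _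
    have step3 : N ^ 5 = Real.exp (5 * L) := by
      rw [show (5 : ℝ) * L = (5 : ℕ) * L by norm_num, Real.exp_nat_mul, Real.exp_log hN0]
    linarith [step1.trans step2, step3.le]
  -- reduce to squared inequality
  have hs0 : (0 : ℝ) < Real.sqrt (1 + t ^ 2) := Real.sqrt_pos.mpr (by positivity)
  set s := Real.sqrt (1 + t ^ 2) with hsdef
  have hsp : (0 : ℝ) < s ^ (n - 1) := pow_pos hs0 _
  have h2π : (0 : ℝ) < Real.sqrt (2 * Real.pi) := Real.sqrt_pos.mpr (by positivity)
  have lhs_eq : N * (t⁻¹ * (s⁻¹) ^ (n - 1)) = N / (t * s ^ (n - 1)) := by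
    rw [inv_pow]; field_simp
  have rhs_eq : 8 / (A * Real.sqrt (2 * Real.pi)) * (1 / N) =
      8 / (A * Real.sqrt (2 * Real.pi) * N) := by
    field_simp
  rw [lhs_eq, rhs_eq, div_le_div_iff₀ (by positivity) (by positivity)]
  have key : (N * (A * Real.sqrt (2 * Real.pi) * N)) ^ 2 ≤ (8 * (t * s ^ (n - 1))) ^ 2 := by
    have e2 : (Real.sqrt (2 * Real.pi)) ^ 2 = 2 * Real.pi := Real.sq_sqrt (by positivity)
    have e3 : (s ^ (n - 1)) ^ 2 = (1 + t ^ 2) ^ (n - 1) := by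
      rw [← pow_mul, mul_comm (n-1) 2, pow_mul, hsdef, Real.sq_sqrt (by positivity)]
    have expand : (N * (A * Real.sqrt (2 * Real.pi) * N)) ^ 2
        = N ^ 4 * A ^ 2 * (2 * Real.pi) := by
      rw [mul_pow, mul_pow, mul_pow, e2]; ring
    have expand2 : (8 * (t * s ^ (n - 1))) ^ 2 = 64 * (t ^ 2 * (1 + t ^ 2) ^ (n - 1)) := by
      rw [mul_pow, mul_pow, e3]; norm_num
    rw [expand, expand2]
    have c3 : N ^ 4 * A ^ 2 * (2 * Real.pi) ≤ N ^ 4 * A ^ 2 * (64 * L) := by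
      have : 2 * Real.pi ≤ 64 * L := by linarith [Real.pi_le_four]
      exact mul_le_mul_of_nonneg_left this (by positivity)
    have c2 : N ^ 4 * A ^ 2 * (64 * L) = 64 * (t ^ 2 * N ^ 5) := by
      have : t ^ 2 * N ^ 5 = (t ^ 2 * N) * N ^ 4 := by ring
      rw [this, ht2]; ring
    have c1 : 64 * (t ^ 2 * N ^ 5) ≤ 64 * (t ^ 2 * (1 + t ^ 2) ^ (n - 1)) := by
      gcongr
    linarith
  calc N * (A * Real.sqrt (2 * Real.pi) * N)
      = Real.sqrt ((N * (A * Real.sqrt (2 * Real.pi) * N)) ^ 2) :=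
        (Real.sqrt_sq (by positivity)).symm
    _ ≤ Real.sqrt ((8 * (t * s ^ (n - 1))) ^ 2) := Real.sqrt_le_sqrt key
    _ = 8 * (t * s ^ (n - 1)) := Real.sqrt_sq (by positivity)

end AuxSphereConc

/-- Lemma 2.6: concentration of the maximal coordinate on the sphere. -/
theorem sphere_max_coordinate_concentration (n : ℕ) (hn : 4 ≤ n) (A : ℝ) (hA : 4 ≤ A) :
    sphereMeasure n {θ : Fin n → ℝ | A * Real.sqrt (Real.log n / n) < ⨆ i, |θ i|}
      ≤ ENNReal.ofReal (8 / (A * Real.sqrt (2 * Real.pi)) * (1 / n)) := by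
  haveI : Nonempty (Fin n) := ⟨⟨0, by omega⟩⟩
  have hN : (4 : ℝ) ≤ (n : ℝ) := by exact_mod_cast hn
  have hN0 : (0 : ℝ) < n := by linarith
  have hL0 : 0 < Real.log n := Real.log_pos (by linarith)
  set t := A * Real.sqrt (Real.log n / n) with htdef
  have ht0 : 0 < t := by rw [htdef]; positivity
  have hf : Measurable (fun x : Fin n → ℝ => (Real.sqrt (∑ i, x i ^ 2))⁻¹ • x) := by
    apply Measurable.smul (f := fun x : Fin n → ℝ => (Real.sqrt (∑ i, x i ^ 2))⁻¹) (g := id)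
    · exact (Measurable.sqrt
        (Finset.measurable_sum _ fun i _ => (measurable_pi_apply i).pow_const 2)).inv
    · exact measurable_id
  have set_eq : {θ : Fin n → ℝ | t < ⨆ i, |θ i|} = ⋃ i, {θ : Fin n → ℝ | t < |θ i|} := by
    ext θ
    simp only [Set.mem_setOf_eq, Set.mem_iUnion]
    exact lt_ciSup_iff (Set.finite_range _).bddAbove
  have hSmeas : MeasurableSet {θ : Fin n → ℝ | t < ⨆ i, |θ i|} := by
    rw [set_eq]
    exact MeasurableSet.iUnion fun i =>
      measurableSet_lt measurable_const (measurable_pi_apply i).abs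
  rw [sphereMeasure, Measure.map_apply hf hSmeas]
  have incl : (fun x : Fin n → ℝ => (Real.sqrt (∑ i, x i ^ 2))⁻¹ • x) ⁻¹'
        {θ : Fin n → ℝ | t < ⨆ i, |θ i|}
      ⊆ ⋃ i, {x : Fin n → ℝ | t ^ 2 * ∑ j, x j ^ 2 < x i ^ 2} := by
    intro x hx
    rw [set_eq] at hx
    simp only [Set.mem_preimage, Set.mem_iUnion, Set.mem_setOf_eq] at hx ⊢
    obtain ⟨i, hi⟩ := hx
    refine ⟨i, ?_⟩
    set Q := ∑ j, x j ^ 2 with hQ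
    have hQ0 : 0 ≤ Q := Finset.sum_nonneg fun j _ => sq_nonneg _
    have habs : |((Real.sqrt Q)⁻¹ • x) i| = (Real.sqrt Q)⁻¹ * |x i| := by
      simp only [Pi.smul_apply, smul_eq_mul, abs_mul, abs_inv,
        abs_of_nonneg (Real.sqrt_nonneg _)]
    rw [habs] at hi
    rcases eq_or_lt_of_le hQ0 with h0 | hpos
    · exfalso
      rw [← h0] at hi
      simp at hi; linarith
    · have hsq : 0 < Real.sqrt Q := Real.sqrt_pos.mpr hpos
      have h1 : t * Real.sqrt Q < |x i| := by
        rw [inv_mul_eq_div, lt_div_iff₀ hsq] at hi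
        linarith
      have h2 : (t * Real.sqrt Q) ^ 2 < |x i| ^ 2 :=
        pow_lt_pow_left₀ h1 (by positivity) two_ne_zero
      rw [mul_pow, Real.sq_sqrt hQ0, sq_abs] at h2
      exact h2
  refine le_trans (measure_mono incl) ?_
  refine le_trans (measure_iUnion_le _) ?_
  rw [tsum_fintype]
  by_cases hcase : t < 1
  · calc (∑ i, (Measure.pi fun _ : Fin n => gaussianReal 0 1)
            {x : Fin n → ℝ | t ^ 2 * ∑ j, x j ^ 2 < x i ^ 2})
        ≤ ∑ _i : Fin n, ENNReal.ofReal (t⁻¹ * ((Real.sqrt (1 + t ^ 2))⁻¹) ^ (n - 1)) :=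
          Finset.sum_le_sum fun i _ => per_index_bound ht0 i
      _ = (n : ENNReal) * ENNReal.ofReal (t⁻¹ * ((Real.sqrt (1 + t ^ 2))⁻¹) ^ (n - 1)) := by
          rw [Finset.sum_const, Finset.card_univ, Fintype.card_fin, nsmul_eq_mul]
      _ = ENNReal.ofReal ((n : ℝ) * (t⁻¹ * ((Real.sqrt (1 + t ^ 2))⁻¹) ^ (n - 1))) := by
          rw [show ((n : ENNReal)) = ENNReal.ofReal (n : ℝ) from (ENNReal.ofReal_natCast n).symm,
            ← ENNReal.ofReal_mul (by positivity : (0:ℝ) ≤ (n:ℝ))]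
      _ ≤ ENNReal.ofReal (8 / (A * Real.sqrt (2 * Real.pi)) * (1 / n)) :=
          ENNReal.ofReal_le_ofReal (scalar_ineq hn hA htdef hcase)
  · have hempty : ∀ i : Fin n,
        {x : Fin n → ℝ | t ^ 2 * ∑ j, x j ^ 2 < x i ^ 2} = ∅ := by
      intro i
      ext x
      simp only [Set.mem_setOf_eq, Set.mem_empty_iff_false, iff_false, not_lt]
      have hle : x i ^ 2 ≤ ∑ j, x j ^ 2 :=
        Finset.single_le_sum (fun j _ => sq_nonneg (x j)) (Finset.mem_univ i)
      have h1 : (1 : ℝ) ≤ t := not_lt.mp hcase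
      have hsum : 0 ≤ ∑ j, x j ^ 2 :=
        Finset.sum_nonneg fun j _ => sq_nonneg (x j)
      have h1sq : (1:ℝ) ≤ t ^ 2 := by nlinarith
      nlinarith [mul_le_mul_of_nonneg_right h1sq hsum]
    simp only [hempty, measure_empty, Finset.sum_const, smul_zero]
    exact zero_le
end

section
/- Let ν be a compactly supported probability measure on ℝ and let M > 0. Suppose there exist an open set U ⊆ ℂ containing ℂ⁺ ∪ {x ∈ ℝ : |x| > M} and a holomorphic function g : U → ℂ such that g(z) = G_ν(z) for all z ∈ ℂ⁺. Then the support of ν is contained in [−M, M]. -/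
open MeasureTheory ProbabilityTheory

open MeasureTheory ProbabilityTheory Set Complex Filter Topology ENNReal

lemma integrable_cauchy (ν : Measure ℝ) [IsProbabilityMeasure ν] {z : ℂ} (hz : 0 < z.im) :
    Integrable (fun t : ℝ => (z - (t : ℂ))⁻¹) ν := by
  refine (integrable_const (z.im)⁻¹).mono' ?_ (Eventually.of_forall fun t => ?_)
  · refine Continuous.aestronglyMeasurable (Continuous.inv₀ (by fun_prop) fun t => ?_)
    intro h
    have := congrArg Complex.im h
    simp at this
    linarith
  · rw [norm_inv]
    refine inv_anti₀ hz ?_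
    calc z.im = (z - (t:ℂ)).im := by simp
    _ ≤ |(z - (t:ℂ)).im| := le_abs_self _
    _ ≤ ‖z - (t:ℂ)‖ := Complex.abs_im_le_norm _

lemma inv_im_eq (z : ℂ) (t : ℝ) :
    ((z - (t : ℂ))⁻¹).im = -z.im / ((z.re - t)^2 + z.im^2) := by
  rw [Complex.inv_im]
  simp [Complex.normSq_apply, pow_two]

lemma cauchyT_im (ν : Measure ℝ) [IsProbabilityMeasure ν] {z : ℂ} (hz : 0 < z.im) :
    (cauchyT ν z).im = ∫ t, (-z.im / ((z.re - t)^2 + z.im^2)) ∂ν := by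
  have h := (Complex.imCLM.integral_comp_comm (integrable_cauchy ν hz)).symm
  simp only [Complex.imCLM_apply] at h
  rw [cauchyT, h]
  congr 1
  ext t
  exact inv_im_eq z t

lemma integrable_poisson (ν : Measure ℝ) [IsProbabilityMeasure ν] (x : ℝ) {y : ℝ} (hy : 0 < y) :
    Integrable (fun t : ℝ => y / ((x - t)^2 + y^2)) ν := by
  refine (integrable_const y⁻¹).mono' (Continuous.aestronglyMeasurable (Continuous.div continuous_const (by fun_prop) fun t => by positivity)) (Eventually.of_forall fun t => ?_)
  have h1 : (0:ℝ) < (x - t)^2 + y^2 := by positivity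
  rw [Real.norm_eq_abs]
  rw [_root_.abs_of_nonneg (by positivity : (0:ℝ) ≤ y / ((x - t)^2 + y^2))]
  calc y / ((x - t)^2 + y^2) ≤ y / y^2 :=
        div_le_div_of_nonneg_left hy.le (by positivity) (by nlinarith [sq_nonneg (x-t)])
  _ = y⁻¹ := by rw [pow_two]; field_simp

lemma interval_bound (ν : Measure ℝ) [IsProbabilityMeasure ν] (x : ℝ) {y ε : ℝ} (hy : 0 < y)
    (hb : |(cauchyT ν ((x:ℂ) + (y:ℂ) * Complex.I)).im| ≤ ε) :
    ν (Icc (x - y) (x + y)) ≤ ENNReal.ofReal (2 * y * ε) := by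
  set z : ℂ := (x:ℂ) + (y:ℂ) * Complex.I with hzdef
  have hre : z.re = x := by simp [hzdef]
  have him : z.im = y := by simp [hzdef]
  have hz : 0 < z.im := by rw [him]; exact hy
  have hint : Integrable (fun t : ℝ => y / ((x - t)^2 + y^2)) ν := integrable_poisson ν x hy
  have hIm : -(cauchyT ν z).im = ∫ t, y / ((x - t)^2 + y^2) ∂ν := by
    rw [cauchyT_im ν hz, ← integral_neg]
    congr 1; ext t; rw [hre, him]; ring
  have h1 : (1 / (2*y)) * (ν (Icc (x - y) (x + y))).toReal ≤ ∫ t in Icc (x - y) (x + y), y / ((x - t)^2 + y^2) ∂ν := by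
    apply setIntegral_ge_of_const_le_real measurableSet_Icc (measure_ne_top ν _)
    · intro t ht
      rcases ht with ⟨ht1, ht2⟩
      have h2 : (x - t)^2 ≤ y^2 := by nlinarith
      have h3 : (0:ℝ) < (x - t)^2 + y^2 := by positivity
      rw [div_le_div_iff₀ (by positivity) h3]
      nlinarith
    · exact hint.integrableOn
  have h2 : ∫ t in Icc (x - y) (x + y), y / ((x - t)^2 + y^2) ∂ν ≤ ∫ t, y / ((x - t)^2 + y^2) ∂ν :=
    setIntegral_le_integral hint (Eventually.of_forall fun t => by positivity)
  have h3 : -(cauchyT ν z).im ≤ ε := le_trans (neg_le_abs _) hb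
  have h4 : (ν (Icc (x - y) (x + y))).toReal ≤ 2 * y * ε := by
    have hfin : (1 / (2*y)) * (ν (Icc (x - y) (x + y))).toReal ≤ ε :=
      le_trans (le_trans h1 h2) (hIm ▸ h3)
    have h2y : (0:ℝ) < 2 * y := by linarith
    calc (ν (Icc (x - y) (x + y))).toReal
        = (2*y) * ((1 / (2*y)) * (ν (Icc (x - y) (x + y))).toReal) := by field_simp
    _ ≤ (2*y) * ε := by apply mul_le_mul_of_nonneg_left hfin h2y.le
    _ = 2 * y * ε := by ring
  calc ν (Icc (x - y) (x + y)) = ENNReal.ofReal (ν (Icc (x - y) (x + y))).toReal :=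
        (ENNReal.ofReal_toReal (measure_ne_top ν _)).symm
  _ ≤ ENNReal.ofReal (2 * y * ε) := ENNReal.ofReal_le_ofReal h4

lemma cover_bound (ν : Measure ℝ) {a b y : ℝ} (c : ℝ) (hy : 0 < y) (hab : a ≤ b)
    (h : ∀ x ∈ Icc a b, ν (Icc (x - y) (x + y)) ≤ ENNReal.ofReal c) :
    ν (Icc a b) ≤ (((⌊(b - a) / (2*y)⌋₊ + 1 : ℕ)) : ℝ≥0∞) * ENNReal.ofReal c := by
  set N : ℕ := ⌊(b - a) / (2*y)⌋₊ + 1 with hN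
  set cc : ℕ → ℝ := fun k => min (a + (2 * k + 1) * y) b with hcc
  have hmem : ∀ k, cc k ∈ Icc a b := by
    intro k
    constructor
    · apply le_min _ hab
      nlinarith [Nat.cast_nonneg (α := ℝ) k]
    · exact min_le_right _ _
  have hcover : Icc a b ⊆ ⋃ k ∈ Finset.range N, Icc (cc k - y) (cc k + y) := by
    intro x hx
    rcases hx with ⟨hx1, hx2⟩
    set k : ℕ := ⌊(x - a) / (2*y)⌋₊ with hk
    have h2y : (0:ℝ) < 2*y := by linarith
    have hk1 : (k : ℝ) * (2*y) ≤ x - a := by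
      have := Nat.floor_le (div_nonneg (by linarith) h2y.le : (0:ℝ) ≤ (x - a)/(2*y))
      calc (k:ℝ) * (2*y) ≤ ((x-a)/(2*y)) * (2*y) := by
            apply mul_le_mul_of_nonneg_right this h2y.le
      _ = x - a := by field_simp
    have hk2 : x - a < ((k:ℝ) + 1) * (2*y) := by
      have := Nat.lt_floor_add_one ((x - a)/(2*y))
      calc x - a = ((x-a)/(2*y)) * (2*y) := by field_simp
      _ < ((k:ℝ) + 1) * (2*y) := by apply mul_lt_mul_of_pos_right this h2y
    have hkN : k < N := by
      rw [hN, Nat.lt_succ_iff]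
      exact Nat.floor_le_floor (by gcongr <;> linarith)
    refine Set.mem_biUnion (Finset.mem_coe.mpr (Finset.mem_range.mpr hkN)) ?_
    constructor
    · calc cc k - y ≤ (a + (2 * k + 1) * y) - y := by
            apply sub_le_sub_right (min_le_left _ _)
      _ ≤ x := by nlinarith
    · rcases le_or_gt (a + (2 * k + 1) * y) b with hcase | hcase
      · have : cc k = a + (2 * k + 1) * y := min_eq_left hcase
        rw [this]; nlinarith
      · have : cc k = b := min_eq_right hcase.le
        rw [this]; linarith
  calc ν (Icc a b) ≤ ν (⋃ k ∈ Finset.range N, Icc (cc k - y) (cc k + y)) := measure_mono hcover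
  _ ≤ ∑ k ∈ Finset.range N, ν (Icc (cc k - y) (cc k + y)) := measure_biUnion_finset_le _ _
  _ ≤ ∑ _k ∈ Finset.range N, ENNReal.ofReal c := Finset.sum_le_sum (fun k _ => h (cc k) (hmem k))
  _ = (N : ℝ≥0∞) * ENNReal.ofReal c := by rw [Finset.sum_const, Finset.card_range]; simp [nsmul_eq_mul]


/-- Lemma 5.7: if the Cauchy transform of a compactly supported probability measure
extends analytically across `{x ∈ ℝ : |x| > M}`, then the support is contained in
`[-M, M]`. -/
theorem support_subset_of_analytic_continuation (ν : Measure ℝ) [IsProbabilityMeasure ν]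
    (hcs : ∃ K : Set ℝ, IsCompact K ∧ ν Kᶜ = 0)
    (M : ℝ) (hM : 0 < M) (U : Set ℂ) (hUopen : IsOpen U)
    (hU1 : {z : ℂ | 0 < z.im} ⊆ U)
    (hU2 : (fun x : ℝ => (x : ℂ)) '' {x : ℝ | M < |x|} ⊆ U)
    (g : ℂ → ℂ) (hg : DifferentiableOn ℂ g U)
    (hgG : ∀ z : ℂ, 0 < z.im → g z = cauchyT ν z) :
    msupport ν ⊆ Set.Icc (-M) M := by
  obtain ⟨K, hK, hKν⟩ := hcs
  obtain ⟨R₀, hR₀⟩ := hK.isBounded.subset_closedBall 0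
  set R : ℝ := max R₀ M with hRdef
  have hRM : M ≤ R := le_max_right _ _
  have hRpos : 0 < R := lt_of_lt_of_le hM hRM
  have hKR : K ⊆ Icc (-R) R := by
    intro t ht
    have := hR₀ ht
    rw [Real.closedBall_eq_Icc] at this
    constructor
    · calc -R ≤ -R₀ := by simp [hRdef]
      _ ≤ t := by linarith [this.1]
    · calc t ≤ 0 + R₀ := this.2
      _ ≤ R := by simp [hRdef]
  have hcg : ContinuousOn g U := hg.continuousOn
  have hgan : AnalyticOnNhd ℂ g U := hg.analyticOnNhd hUopen
  have hUreal : ∀ x : ℝ, M < |x| → (x:ℂ) ∈ U := fun x hx => hU2 ⟨x, hx, rfl⟩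
  have hae : ∀ᵐ t ∂ν, t ∈ K := by
    rw [ae_iff]
    convert hKν using 2
    rfl
  -- Step 1: Im g vanishes far away on the real axis
  have hfar : ∀ x : ℝ, R + 1 < |x| → (g (x:ℂ)).im = 0 := by
    intro x hx
    have hxM : M < |x| := by linarith
    have hxU : (x:ℂ) ∈ U := hUreal x hxM
    have hmap : Continuous (fun y : ℝ => (x:ℂ) + (y:ℂ) * Complex.I) := by fun_prop
    have hc : ContinuousAt (fun y : ℝ => (g ((x:ℂ) + (y:ℂ) * Complex.I)).im) 0 := by
      have h1 : ContinuousAt g ((x:ℂ) + ((0:ℝ):ℂ) * Complex.I) := by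
        have := hcg.continuousAt (hUopen.mem_nhds hxU)
        simpa using this
      have h2 : ContinuousAt (fun y : ℝ => g ((x:ℂ) + (y:ℂ) * Complex.I)) 0 :=
        ContinuousAt.comp (g := g) h1 hmap.continuousAt
      exact Complex.continuous_im.continuousAt.comp h2
    have h1 : Tendsto (fun y : ℝ => (g ((x:ℂ) + (y:ℂ) * Complex.I)).im) (𝓝[>] 0)
        (𝓝 ((g (x:ℂ)).im)) := by
      have h0 : Tendsto (fun y : ℝ => (g ((x:ℂ) + (y:ℂ) * Complex.I)).im) (𝓝[>] 0)
          (𝓝 ((g ((x:ℂ) + ((0:ℝ):ℂ) * Complex.I)).im)) :=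
        hc.tendsto.mono_left nhdsWithin_le_nhds
      simpa using h0
    have h2 : Tendsto (fun y : ℝ => (g ((x:ℂ) + (y:ℂ) * Complex.I)).im) (𝓝[>] 0) (𝓝 0) := by
      apply squeeze_zero_norm' (a := fun y : ℝ => y)
      · filter_upwards [self_mem_nhdsWithin] with y hy
        rw [Set.mem_Ioi] at hy
        set z : ℂ := (x:ℂ) + (y:ℂ) * Complex.I with hzdef
        have hzim : z.im = y := by simp [hzdef]
        have hzre : z.re = x := by simp [hzdef]
        have hz : 0 < z.im := by rw [hzim]; exact hy
        rw [hgG z hz, cauchyT_im ν hz]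
        rw [Real.norm_eq_abs]
        have hb : ∀ᵐ t ∂ν, |(-z.im / ((z.re - t)^2 + z.im^2))| ≤ y := by
          filter_upwards [hae] with t ht
          have htR : |t| ≤ R := abs_le.mpr (hKR ht)
          have hxt : 1 ≤ |x - t| := by
            have : |x| - |t| ≤ |x - t| := by
              have := abs_sub_abs_le_abs_sub x t
              linarith
            linarith
          have hxt2 : 1 ≤ (x - t)^2 := by nlinarith [abs_nonneg (x-t), _root_.sq_abs (x-t)]
          have hpos : (0:ℝ) < (z.re - t)^2 + z.im^2 := by
            rw [hzre, hzim]; nlinarith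
          rw [abs_div, _root_.abs_of_nonneg (by positivity : (0:ℝ) ≤ (z.re - t)^2 + z.im^2),
            div_le_iff₀ hpos, hzre, hzim, abs_neg, _root_.abs_of_nonneg hy.le]
          nlinarith
        have hintg : Integrable (fun t : ℝ => |(-z.im / ((z.re - t)^2 + z.im^2))|) ν := by
          have h0 := ((integrable_poisson ν z.re (hzim ▸ hy)).neg).abs
          simpa [neg_div] using h0
        calc |∫ t, (-z.im / ((z.re - t)^2 + z.im^2)) ∂ν|
            ≤ ∫ t, |(-z.im / ((z.re - t)^2 + z.im^2))| ∂ν := by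
              simpa [Real.norm_eq_abs] using
                norm_integral_le_integral_norm (μ := ν)
                  (fun t : ℝ => -z.im / ((z.re - t)^2 + z.im^2))
        _ ≤ ∫ _t, y ∂ν := integral_mono_ae hintg (integrable_const y) hb
        _ = y := by simp
      · exact tendsto_id.mono_left nhdsWithin_le_nhds
    have : (𝓝[>] (0:ℝ)).NeBot := by infer_instance
    exact tendsto_nhds_unique h1 h2
  -- Step 2: identity theorem
  have him : ∀ x : ℝ, M < |x| → (g (x:ℂ)).im = 0 := by
    have han : ∀ x : ℝ, M < |x| → AnalyticAt ℝ (fun s : ℝ => (g (s:ℂ)).im) x := by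
      intro x hx
      have h1 : AnalyticAt ℂ g (x:ℂ) := hgan _ (hUreal x hx)
      have h2 : AnalyticAt ℝ g (x:ℂ) := h1.restrictScalars
      have h3 : AnalyticAt ℝ (fun s : ℝ => (s:ℂ)) x := Complex.ofRealCLM.analyticAt x
      have h4 : AnalyticAt ℝ (fun s : ℝ => g (s:ℂ)) x := h2.comp h3
      exact (Complex.imCLM.analyticAt _).comp h4
    intro x hx
    rcases lt_abs.mp hx with hpos | hneg
    · have hsub : EqOn (fun s : ℝ => (g (s:ℂ)).im) 0 (Ioi M) := by
        apply AnalyticOnNhd.eqOn_zero_of_preconnected_of_eventuallyEq_zero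
          (fun s hs => han s (by rw [Set.mem_Ioi] at hs; calc M < s := hs
                                                         _ ≤ |s| := le_abs_self s))
          isPreconnected_Ioi (z₀ := R + 2) (by simp [Set.mem_Ioi]; linarith)
        filter_upwards [Ioi_mem_nhds (by linarith : R + 1 < R + 2)] with s hs
        rw [Set.mem_Ioi] at hs
        exact hfar s (by calc R + 1 < s := hs
                          _ ≤ |s| := le_abs_self s)
      exact hsub (Set.mem_Ioi.mpr hpos)
    · have hsub : EqOn (fun s : ℝ => (g (s:ℂ)).im) 0 (Iio (-M)) := by
        apply AnalyticOnNhd.eqOn_zero_of_preconnected_of_eventuallyEq_zero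
          (fun s hs => han s (by rw [Set.mem_Iio] at hs; calc M < -s := by linarith
                                                         _ ≤ |s| := neg_le_abs s))
          isPreconnected_Iio (z₀ := -(R + 2)) (by simp [Set.mem_Iio]; linarith)
        filter_upwards [Iio_mem_nhds (by linarith : -(R+2) < -(R + 1))] with s hs
        rw [Set.mem_Iio] at hs
        exact hfar s (by calc R + 1 < -s := by linarith
                          _ ≤ |s| := neg_le_abs s)
      exact hsub (Set.mem_Iio.mpr (by linarith))
  -- Step 3: the measure vanishes near any x₀ with |x₀| > M
  intro x₀ hsupp
  by_contra hx₀
  have hx₀M : M < |x₀| := by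
    rw [Set.mem_Icc, ← abs_le] at hx₀
    exact not_le.mp hx₀
  set r : ℝ := (|x₀| - M) / 2 with hrdef
  have hr : 0 < r := by rw [hrdef]; linarith
  have hIccM : ∀ x ∈ Icc (x₀ - r) (x₀ + r), M < |x| := by
    intro x hx
    rcases hx with ⟨h1, h2⟩
    have : |x₀ - x| ≤ r := abs_le.mpr ⟨by linarith, by linarith⟩
    have h3 : |x₀| - |x| ≤ r := le_trans (abs_sub_abs_le_abs_sub x₀ x) this
    rw [hrdef] at h3
    have : M < |x| := by linarith
    exact this
  have key : ∀ ε : ℝ, 0 < ε → ν (Icc (x₀ - r) (x₀ + r)) ≤ ENNReal.ofReal ((2*r + 4) * ε) := by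
    intro ε hε
    have hWopen : IsOpen (U ∩ (fun z => |(g z).im|) ⁻¹' (Iio ε)) := by
      apply ContinuousOn.isOpen_inter_preimage _ hUopen isOpen_Iio
      exact (continuous_abs.comp Complex.continuous_im).comp_continuousOn hcg
    have hCcomp : IsCompact ((fun x : ℝ => (x:ℂ)) '' Icc (x₀ - r) (x₀ + r)) :=
      isCompact_Icc.image Complex.continuous_ofReal
    have hCW : (fun x : ℝ => (x:ℂ)) '' Icc (x₀ - r) (x₀ + r) ⊆
        U ∩ (fun z => |(g z).im|) ⁻¹' (Iio ε) := by
      rintro _ ⟨x, hx, rfl⟩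
      refine ⟨hUreal x (hIccM x hx), ?_⟩
      simp only [Set.mem_preimage, Set.mem_Iio]
      rw [him x (hIccM x hx)]
      simpa using hε
    obtain ⟨δ, hδpos, hδ⟩ := hCcomp.exists_thickening_subset_open hWopen hCW
    set y : ℝ := min (δ/2) 1 with hydef
    have hy : 0 < y := lt_min (by linarith) one_pos
    have hy1 : y ≤ 1 := min_le_right _ _
    have hyδ : y < δ := lt_of_le_of_lt (min_le_left _ _) (by linarith)
    have hptwise : ∀ x ∈ Icc (x₀ - r) (x₀ + r),
        ν (Icc (x - y) (x + y)) ≤ ENNReal.ofReal (2 * y * ε) := by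
      intro x hx
      set z : ℂ := (x:ℂ) + (y:ℂ) * Complex.I with hzdef
      have hzmem : z ∈ Metric.thickening δ ((fun x : ℝ => (x:ℂ)) '' Icc (x₀ - r) (x₀ + r)) := by
        rw [Metric.mem_thickening_iff]
        refine ⟨(x:ℂ), ⟨x, hx, rfl⟩, ?_⟩
        have : dist z (x:ℂ) = y := by
          rw [Complex.dist_eq]
          have : z - (x:ℂ) = (y:ℂ) * Complex.I := by rw [hzdef]; ring
          rw [this]
          simp [norm_mul, _root_.abs_of_nonneg hy.le]
        rw [this]; exact hyδ
      have hzW := hδ hzmem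
      have hzim : 0 < z.im := by simp [hzdef]; exact hy
      have hb : |(cauchyT ν z).im| ≤ ε := by
        rw [← hgG z hzim]
        exact le_of_lt hzW.2
      exact interval_bound ν x hy hb
    have hcov := cover_bound ν (2 * y * ε) hy (by linarith : x₀ - r ≤ x₀ + r) hptwise
    refine le_trans hcov ?_
    set N : ℕ := ⌊(x₀ + r - (x₀ - r)) / (2*y)⌋₊ with hNdef
    have hNle : (N : ℝ) ≤ 2*r / (2*y) := by
      rw [hNdef]
      have h2 : x₀ + r - (x₀ - r) = 2*r := by ring
      rw [h2]
      exact Nat.floor_le (by positivity)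
    have hcalc : ((N + 1 : ℕ) : ℝ) * (2 * y * ε) ≤ (2*r + 4) * ε := by
      push_cast
      have h1 : ((N:ℝ) + 1) * (2 * y) ≤ 2*r + 4 := by
        have : (N:ℝ) * (2*y) ≤ 2*r := by
          calc (N:ℝ) * (2*y) ≤ (2*r / (2*y)) * (2*y) := by
                apply mul_le_mul_of_nonneg_right hNle (by linarith)
          _ = 2*r := by field_simp
        nlinarith
      nlinarith
    calc ((N + 1 : ℕ) : ℝ≥0∞) * ENNReal.ofReal (2 * y * ε)
        = ENNReal.ofReal (((N + 1 : ℕ) : ℝ)) * ENNReal.ofReal (2 * y * ε) := by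
          rw [ENNReal.ofReal_natCast]
    _ = ENNReal.ofReal (((N + 1 : ℕ) : ℝ) * (2 * y * ε)) := by
          rw [← ENNReal.ofReal_mul (by positivity : (0:ℝ) ≤ ((N + 1 : ℕ) : ℝ))]
    _ ≤ ENNReal.ofReal ((2*r + 4) * ε) := ENNReal.ofReal_le_ofReal hcalc
  have hν0 : ν (Icc (x₀ - r) (x₀ + r)) = 0 := by
    by_contra hne
    have hfin : ν (Icc (x₀ - r) (x₀ + r)) ≠ ⊤ := measure_ne_top ν _
    set m : ℝ := (ν (Icc (x₀ - r) (x₀ + r))).toReal with hmdef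
    have hmpos : 0 < m := ENNReal.toReal_pos hne hfin
    have hden : (0:ℝ) < 2*r + 4 := by linarith
    have := key (m / (2 * (2*r + 4))) (by positivity)
    have hle : m ≤ (2*r + 4) * (m / (2 * (2*r + 4))) :=
      ENNReal.toReal_le_of_le_ofReal (by positivity) this
    have : (2*r + 4) * (m / (2 * (2*r + 4))) = m / 2 := by field_simp
    rw [this] at hle
    linarith
  have hIoo : ν (Ioo (x₀ - r) (x₀ + r)) = 0 :=
    le_antisymm (le_trans (measure_mono Ioo_subset_Icc_self) hν0.le) (zero_le)
  have := hsupp (Ioo (x₀ - r) (x₀ + r))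
    (Ioo_mem_nhds (by linarith) (by linarith))
  rw [hIoo] at this
  exact lt_irrefl 0 this
end
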